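/- In the single-node problem, let λ* > 0 be the unique value with ∑_{l∈S} p(λ*; t_l, σ_l) = E. Then the allocation p*_l = p(λ*; t_l, σ_l) (l ∈ S) is the unique minimizer of ∑_{l∈S} t_l / ((1/2)·ln(1 + p_l/σ_l) − t_l) over all p : S → ℝ with ∑_{l∈S} p_l ≤ E and p_l > σ_l(e^{2 t_l} − 1) for all l. -/
import Mathlib


open BigOperators

/-- `p` solves the stationarity equation
`(t/(2σ)) · ((1/2)·ln(1 + p/σ) − t)^{−2} · (1 + p/σ)^{−1} = λ` on the domain
`p > σ(e^{2t} − 1)`; this characterizes the unique solution `p(λ; t, σ)`. -/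
def IsStatSol (t σ lam p : ℝ) : Prop :=
  σ * (Real.exp (2 * t) - 1) < p ∧
    t / (2 * σ) / ((1 / 2) * Real.log (1 + p / σ) - t) ^ 2 / (1 + p / σ) = lam

lemma dom_facts (t σ p : ℝ) (ht : 0 < t) (hσ : 0 < σ)
    (hp : σ * (Real.exp (2 * t) - 1) < p) :
    Real.exp (2 * t) < 1 + p / σ ∧ 0 < (1 / 2) * Real.log (1 + p / σ) - t := by
  have h1 : Real.exp (2 * t) - 1 < p / σ := by
    rw [lt_div_iff₀ hσ]; nlinarith
  have ha : Real.exp (2 * t) < 1 + p / σ := by linarith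
  have ha0 : (0:ℝ) < 1 + p / σ := lt_trans (Real.exp_pos _) ha
  have hlog : 2 * t < Real.log (1 + p / σ) := by
    have : Real.exp (2 * t) < Real.exp (Real.log (1 + p / σ)) := by
      rwa [Real.exp_log ha0]
    exact Real.exp_lt_exp.mp this
  exact ⟨ha, by linarith⟩

lemma arith_key (t u v a b : ℝ) (ht : 0 < t) (hu : 0 < u) (hv : 0 < v) (hb : 0 < b)
    (hkey : (b - a) * u * v < 2 * v ^ 2 * b * (v - u)) :
    t / v - t * (a - b) / (2 * v ^ 2 * b) < t / u := by
  have hexp : t / u - (t / v - t * (a - b) / (2 * v ^ 2 * b))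
      = t * (2 * v ^ 2 * b * (v - u) - (b - a) * u * v) / (2 * u * v ^ 3 * b) := by
    field_simp
    ring
  have hden : 0 < 2 * u * v ^ 3 * b := by positivity
  have hnum : 0 < t * (2 * v ^ 2 * b * (v - u) - (b - a) * u * v) := by
    have : 0 < 2 * v ^ 2 * b * (v - u) - (b - a) * u * v := by linarith
    positivity
  have : 0 < t / u - (t / v - t * (a - b) / (2 * v ^ 2 * b)) := by
    rw [hexp]; positivity
  linarith

lemma tangent_lt (t σ lam p q : ℝ) (ht : 0 < t) (hσ : 0 < σ)
    (hp : σ * (Real.exp (2 * t) - 1) < p) (hq : IsStatSol t σ lam q)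
    (hne : p ≠ q) :
    t / ((1 / 2) * Real.log (1 + q / σ) - t) - lam * (p - q)
      < t / ((1 / 2) * Real.log (1 + p / σ) - t) := by
  obtain ⟨hqd, hlam⟩ := hq
  obtain ⟨hae, hu⟩ := dom_facts t σ p ht hσ hp
  obtain ⟨hbe, hv⟩ := dom_facts t σ q ht hσ hqd
  set a : ℝ := 1 + p / σ with ha_def
  set b : ℝ := 1 + q / σ with hb_def
  have ha0 : (0:ℝ) < a := lt_trans (Real.exp_pos _) hae
  have hb0 : (0:ℝ) < b := lt_trans (Real.exp_pos _) hbe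
  set u : ℝ := (1 / 2) * Real.log a - t with hu_def
  set v : ℝ := (1 / 2) * Real.log b - t with hv_def
  have hab : a ≠ b := by
    intro h
    apply hne
    have : p / σ = q / σ := by
      have := h
      rw [ha_def, hb_def] at this
      linarith
    field_simp at this
    exact this
  have hratio : a / b ≠ 1 := by
    intro h
    exact hab (by field_simp at h; linarith)
  have hlog1 : Real.log a - Real.log b < a / b - 1 := by
    have := Real.log_lt_sub_one_of_pos (div_pos ha0 hb0) hratio
    rwa [Real.log_div (ne_of_gt ha0) (ne_of_gt hb0)] at this
  have hlog2 : b - a < 2 * b * (v - u) := by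
    have h2 : b * (a / b - 1) = a - b := by field_simp
    have h3 := mul_lt_mul_of_pos_left hlog1 hb0
    rw [h2] at h3
    have h5 : 2 * b * (v - u) = -(b * (Real.log a - Real.log b)) := by
      rw [hu_def, hv_def]; ring
    linarith
  have hkey : (b - a) * u * v < 2 * v ^ 2 * b * (v - u) := by
    nlinarith [mul_lt_mul_of_pos_right hlog2 (mul_pos hu hv),
      mul_nonneg (mul_nonneg hv.le hb0.le) (sq_nonneg (v - u))]
  have hlamval : lam * (p - q) = t * (a - b) / (2 * v ^ 2 * b) := by
    rw [← hlam]
    rw [ha_def, hb_def, hv_def]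
    field_simp
    ring
  rw [hlamval]
  exact arith_key t u v a b ht hu hv hb0 hkey

lemma tangent_le (t σ lam p q : ℝ) (ht : 0 < t) (hσ : 0 < σ)
    (hp : σ * (Real.exp (2 * t) - 1) < p) (hq : IsStatSol t σ lam q) :
    t / ((1 / 2) * Real.log (1 + q / σ) - t) - lam * (p - q)
      ≤ t / ((1 / 2) * Real.log (1 + p / σ) - t) := by
  by_cases h : p = q
  · subst h; simp
  · exact le_of_lt (tangent_lt t σ lam p q ht hσ hp hq h)

/-- In the single-node problem with links `S`, flows `t_l > 0`, noise
powers `σ_l > 0` and budget `E > ∑_l σ_l(e^{2 t_l} − 1)`, if `λ* > 0` satisfies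
`∑_l p(λ*; t_l, σ_l) = E`, then the allocation `p*_l = p(λ*; t_l, σ_l)` is the unique
minimizer of `∑_l t_l / ((1/2)·ln(1 + p_l/σ_l) − t_l)` over all `p : S → ℝ` with
`∑_l p_l ≤ E` and `p_l > σ_l(e^{2 t_l} − 1)` for all `l`. -/
theorem single_node_unique_minimizer (S : Type) [Fintype S] [Nonempty S]
    (t σ : S → ℝ) (E : ℝ)
    (ht : ∀ l, 0 < t l) (hσ : ∀ l, 0 < σ l)
    (hE : (∑ l, σ l * (Real.exp (2 * t l) - 1)) < E)
    (lam : ℝ) (hlam : 0 < lam) (pstar : S → ℝ)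
    (hsol : ∀ l, IsStatSol (t l) (σ l) lam (pstar l))
    (hsum : (∑ l, pstar l) = E) :
    ((∀ l, σ l * (Real.exp (2 * t l) - 1) < pstar l) ∧ (∑ l, pstar l) ≤ E) ∧
    (∀ p : S → ℝ, (∀ l, σ l * (Real.exp (2 * t l) - 1) < p l) → (∑ l, p l) ≤ E →
      p ≠ pstar →
      (∑ l, t l / ((1 / 2) * Real.log (1 + pstar l / σ l) - t l)) <
        (∑ l, t l / ((1 / 2) * Real.log (1 + p l / σ l) - t l))) := by
  refine ⟨⟨fun l => (hsol l).1, le_of_eq hsum⟩, ?_⟩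
  intro p hdom hle hne
  have hle_all : ∀ l ∈ Finset.univ,
      t l / ((1 / 2) * Real.log (1 + pstar l / σ l) - t l) - lam * (p l - pstar l)
        ≤ t l / ((1 / 2) * Real.log (1 + p l / σ l) - t l) :=
    fun l _ => tangent_le (t l) (σ l) lam (p l) (pstar l) (ht l) (hσ l) (hdom l) (hsol l)
  have hex : ∃ l ∈ Finset.univ,
      t l / ((1 / 2) * Real.log (1 + pstar l / σ l) - t l) - lam * (p l - pstar l)
        < t l / ((1 / 2) * Real.log (1 + p l / σ l) - t l) := by
    obtain ⟨l, hl⟩ := Function.ne_iff.mp hne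
    exact ⟨l, Finset.mem_univ l,
      tangent_lt (t l) (σ l) lam (p l) (pstar l) (ht l) (hσ l) (hdom l) (hsol l) hl⟩
  have hsum_lt := Finset.sum_lt_sum hle_all hex
  have hsplit : (∑ l, (t l / ((1 / 2) * Real.log (1 + pstar l / σ l) - t l)
        - lam * (p l - pstar l)))
      = (∑ l, t l / ((1 / 2) * Real.log (1 + pstar l / σ l) - t l))
        - lam * ((∑ l, p l) - (∑ l, pstar l)) := by
    rw [Finset.sum_sub_distrib, ← Finset.mul_sum, Finset.sum_sub_distrib]
  rw [hsplit] at hsum_lt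
  have hnp : lam * ((∑ l, p l) - (∑ l, pstar l)) ≤ 0 :=
    mul_nonpos_of_nonneg_of_nonpos hlam.le (by rw [hsum]; linarith)
  linarith
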